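/- arXiv:1004.1581 — 6 statements merged into one kernel-verified Lean document; each statement's English description precedes it below -/
import Mathlib

section
/- Let c > 1. Define a_0 = 1, a_k = (-1)^k c^k / ∏_{l=1}^{k}(c^l - 1) for k ≥ 1, and b_0 = 1, b_k = ∏_{l=1}^{k} c^l / ∏_{l=1}^{k}(c^l - 1) for k ≥ 1. Then for every integer n ≥ 1, ∑_{k=0}^{n} b_{n-k} a_k = 0. -/
/-!
Both sequences satisfy first-order recurrences, `a (k+1) (c^(k+1) - 1) = -c a k` and
`b (k+1) (c^(k+1) - 1) = c^(k+1) b k`. With them the convolution `∑ b (n-i) a i` telescopes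
(Gosper): its partial sum up to `j` equals `c^(n-j) b (n-j-1) a j / (c^n - 1)`, and at `j = n - 1`
this cancels the last term `b 0 a n = -c b 0 a (n-1) / (c^n - 1)`.
-/

open Finset

section Recurrence

variable {K : Type*} [Field K] {c : K} {a b : ℕ → K}

theorem div_prod_pow_sub_one_succ_mul {k : ℕ} (hc : c ^ (k + 1) ≠ 1) (x : K) :
    (x / ∏ l ∈ Icc 1 (k + 1), (c ^ l - 1)) * (c ^ (k + 1) - 1)
      = x / ∏ l ∈ Icc 1 k, (c ^ l - 1) := by
  rw [prod_Icc_succ_top (Nat.le_add_left 1 k), div_mul_eq_div_div,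
    div_mul_cancel₀ _ (sub_ne_zero.mpr hc)]

theorem neg_one_pow_mul_pow_div_prod_succ_mul {k : ℕ} (hc : c ^ (k + 1) ≠ 1) :
    ((-1) ^ (k + 1) * c ^ (k + 1) / ∏ l ∈ Icc 1 (k + 1), (c ^ l - 1)) * (c ^ (k + 1) - 1)
      = -c * ((-1) ^ k * c ^ k / ∏ l ∈ Icc 1 k, (c ^ l - 1)) := by
  rw [div_prod_pow_sub_one_succ_mul hc]
  ring

theorem prod_pow_div_prod_succ_mul {k : ℕ} (hc : c ^ (k + 1) ≠ 1) :
    ((∏ l ∈ Icc 1 (k + 1), c ^ l) / ∏ l ∈ Icc 1 (k + 1), (c ^ l - 1)) * (c ^ (k + 1) - 1)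
      = c ^ (k + 1) * ((∏ l ∈ Icc 1 k, c ^ l) / ∏ l ∈ Icc 1 k, (c ^ l - 1)) := by
  rw [div_prod_pow_sub_one_succ_mul hc, prod_Icc_succ_top (Nat.le_add_left 1 k)]
  ring

theorem pow_sub_one_mul_partial_convolution (hc : ∀ l, 0 < l → c ^ l ≠ 1)
    (ha : ∀ k, a (k + 1) * (c ^ (k + 1) - 1) = -c * a k)
    (hb : ∀ k, b (k + 1) * (c ^ (k + 1) - 1) = c ^ (k + 1) * b k) (j m : ℕ) {n : ℕ}
    (hn : j + 1 + m = n) :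
    (c ^ n - 1) * ∑ i ∈ range (j + 1), b (n - i) * a i = c ^ (m + 1) * b m * a j := by
  induction j generalizing m n with
  | zero =>
    subst hn
    rw [sum_range_one, Nat.sub_zero, show 0 + 1 + m = m + 1 by omega, ← hb m]
    ring
  | succ j ih =>
    subst hn
    have hX : c ^ (j + 1) - 1 ≠ 0 := sub_ne_zero.mpr (hc _ j.succ_pos)
    have hY : c ^ (m + 1) - 1 ≠ 0 := sub_ne_zero.mpr (hc _ m.succ_pos)
    rw [sum_range_succ, mul_add, ih (m + 1) (by omega),
      show j + 1 + 1 + m - (j + 1) = m + 1 by omega,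
      show j + 1 + 1 + m = (j + 1) + (m + 1) by omega, pow_add]
    -- after clearing both denominators the step is a polynomial consequence of the recurrences
    refine mul_left_cancel₀ (mul_ne_zero hX hY) ?_
    linear_combination
      (c * c ^ (m + 1) * a j * (c ^ (j + 1) - 1)
          + (c ^ (j + 1) * c ^ (m + 1) - 1) * a (j + 1) * (c ^ (j + 1) - 1)) * hb m
        + ((c ^ (j + 1) * c ^ (m + 1) - 1) * c ^ (m + 1) * b m
          - c ^ (m + 1) * b m * (c ^ (m + 1) - 1)) * ha j

theorem sum_range_sub_mul_eq_zero_of_recurrence (hc : ∀ l, 0 < l → c ^ l ≠ 1)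
    (ha : ∀ k, a (k + 1) * (c ^ (k + 1) - 1) = -c * a k)
    (hb : ∀ k, b (k + 1) * (c ^ (k + 1) - 1) = c ^ (k + 1) * b k) {n : ℕ} (hn : 1 ≤ n) :
    ∑ k ∈ range (n + 1), b (n - k) * a k = 0 := by
  obtain ⟨t, rfl⟩ : ∃ t, n = t + 1 := ⟨n - 1, by omega⟩
  have hn : c ^ (t + 1) - 1 ≠ 0 := sub_ne_zero.mpr (hc _ t.succ_pos)
  refine (mul_eq_zero.mp ?_).resolve_left hn
  rw [sum_range_succ, mul_add, pow_sub_one_mul_partial_convolution hc ha hb t 0 rfl,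
    Nat.sub_self]
  linear_combination b 0 * ha t

end Recurrence

theorem aldous_shields_inverse_toeplitz (c : ℝ) (hc : 1 < c) (a b : ℕ → ℝ)
    (ha0 : a 0 = 1)
    (ha : ∀ k : ℕ, 1 ≤ k →
      a k = (-1 : ℝ) ^ k * c ^ k / ∏ l ∈ Finset.Icc 1 k, (c ^ l - 1))
    (hb0 : b 0 = 1)
    (hb : ∀ k : ℕ, 1 ≤ k →
      b k = (∏ l ∈ Finset.Icc 1 k, c ^ l) / ∏ l ∈ Finset.Icc 1 k, (c ^ l - 1))
    (n : ℕ) (hn : 1 ≤ n) :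
    ∑ k ∈ Finset.range (n + 1), b (n - k) * a k = 0 := by
  have hpow : ∀ l, 0 < l → c ^ l ≠ 1 := fun l hl => (one_lt_pow₀ hc hl.ne').ne'
  have ha' : ∀ k, a k = (-1) ^ k * c ^ k / ∏ l ∈ Icc 1 k, (c ^ l - 1) := by
    rintro (_ | k)
    · simp [ha0]
    · exact ha _ k.succ_pos
  have hb' : ∀ k, b k = (∏ l ∈ Icc 1 k, c ^ l) / ∏ l ∈ Icc 1 k, (c ^ l - 1) := by
    rintro (_ | k)
    · simp [hb0]
    · exact hb _ k.succ_pos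
  refine sum_range_sub_mul_eq_zero_of_recurrence hpow (fun k => ?_) (fun k => ?_) hn
  · rw [ha', ha', neg_one_pow_mul_pow_div_prod_succ_mul (hpow _ k.succ_pos)]
  · rw [hb', hb', prod_pow_div_prod_succ_mul (hpow _ k.succ_pos)]
end

section
/- Let c > 1 and define a_k as a_0 = 1, a_k = (-1)^k c^k / ∏_{l=1}^{k}(c^l - 1) for k ≥ 1, with a_k = 0 for k < 0. Then for all integers i ≥ j ≥ 0, the identity c^{-i+1} a_{i-1-j} - c^{-i} a_{i-j} = -c^{-j} a_{i-j} holds. -/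
open Finset

/-! The coefficients satisfy the first-order recurrence `c a_{k-1} = (1 - c^k) a_k`, which also holds
at `k = 0` because `a_{-1} = 0`. Factoring `c^{-i}` out of the identity, with `k = i - j`, it
becomes `c a_{k-1} - a_k = -c^k a_k`, which is exactly that recurrence. -/

section Field

variable {K : Type*} [Field K]

noncomputable def aldousShieldsCoeff (c : K) (k : ℕ) : K :=
  (-1) ^ k * c ^ k / ∏ l ∈ Icc 1 k, (c ^ l - 1)

@[simp]
theorem aldousShieldsCoeff_zero (c : K) : aldousShieldsCoeff c 0 = 1 := by
  simp [aldousShieldsCoeff]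

theorem mul_aldousShieldsCoeff_eq_one_sub_mul_succ (c : K) (m : ℕ) (hc : c ^ (m + 1) ≠ 1) :
    c * aldousShieldsCoeff c m = (1 - c ^ (m + 1)) * aldousShieldsCoeff c (m + 1) := by
  have hc' : c ^ (m + 1) - 1 ≠ 0 := sub_ne_zero.mpr hc
  rw [aldousShieldsCoeff, aldousShieldsCoeff, prod_Icc_succ_top (by omega), div_mul_eq_div_div,
    ← neg_sub, neg_mul, mul_div_cancel₀ _ hc']
  ring

theorem eigen_identity_of_recurrence {c : K} (hc : c ≠ 0) {a : ℤ → K}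
    (hrec : ∀ n : ℕ, c * a (n - 1) = (1 - c ^ n) * a n) {i j : ℤ} (hij : j ≤ i) :
    c ^ (-i + 1) * a (i - 1 - j) - c ^ (-i) * a (i - j) = -c ^ (-j) * a (i - j) := by
  obtain ⟨n, hn⟩ : ∃ n : ℕ, i - j = n := ⟨(i - j).toNat, by omega⟩
  have hpred : i - 1 - j = n - 1 := by omega
  have hcj : c ^ (-j) = c ^ (-i) * c ^ n := by
    rw [← zpow_natCast, ← zpow_add₀ hc]
    congr 1
    omega
  rw [hpred, hn, hcj, zpow_add_one₀ hc]
  linear_combination c ^ (-i) * hrec n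

end Field

theorem aldous_shields_eigenvector_general (c : ℝ) (hc : 1 < c) (a : ℤ → ℝ)
    (ha0 : a 0 = 1)
    (haneg : ∀ k : ℤ, k < 0 → a k = 0)
    (ha : ∀ k : ℕ, 1 ≤ k →
      a (k : ℤ) = (-1 : ℝ) ^ k * c ^ k / ∏ l ∈ Finset.Icc 1 k, (c ^ l - 1))
    (i j : ℤ) (hij : j ≤ i) :
    c ^ (-i + 1) * a (i - 1 - j) - c ^ (-i) * a (i - j) = -c ^ (-j) * a (i - j) := by
  have hcoeff : ∀ n : ℕ, a n = aldousShieldsCoeff c n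
    | 0 => by simpa using ha0
    | n + 1 => ha (n + 1) (by omega)
  refine eigen_identity_of_recurrence (by positivity) (fun n ↦ ?_) hij
  cases n with
  | zero => simp [haneg]
  | succ m =>
    rw [hcoeff, Nat.cast_succ, add_sub_cancel_right, hcoeff]
    exact mul_aldousShieldsCoeff_eq_one_sub_mul_succ c m (one_lt_pow₀ hc m.succ_ne_zero).ne'

theorem aldous_shields_eigenvector (c : ℝ) (hc : 1 < c) (a : ℤ → ℝ)
    (ha0 : a 0 = 1)
    (haneg : ∀ k : ℤ, k < 0 → a k = 0)
    (ha : ∀ k : ℕ, 1 ≤ k →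
      a (k : ℤ) = (-1 : ℝ) ^ k * c ^ k / ∏ l ∈ Finset.Icc 1 k, (c ^ l - 1))
    (i j : ℤ) (hj : 0 ≤ j) (hij : j ≤ i) :
    c ^ (-i + 1) * a (i - 1 - j) - c ^ (-i) * a (i - j) = -c ^ (-j) * a (i - j) :=
  aldous_shields_eigenvector_general c hc a ha0 haneg ha i j hij
end

section
/- Let c > 1, let a_k (k ≥ 0) be defined by a_0 = 1, a_k = (-1)^k c^k / ∏_{l=1}^k (c^l - 1), and b_k by b_0 = 1, b_k = ∏_{l=1}^k c^l/(c^l - 1). Let y_n(t) solve the ODE system ẏ_n = c^{-(n-1)} y_{n-1} - c^{-n} y_n for n ≥ 0 (with y_{-1} := 0), with initial condition y_0(0) = 1 and y_n(0) = 0 for n ≥ 1. Then y_n(t) = ∑_{k=0}^{n} a_{n-k} b_k e^{-c^{-k} t} for all n ≥ 0 and t ≥ 0. -/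
/-!
A sum `∑ₖ e n k * exp (-r k * t)` solves the pure-birth equations `y₀' = -r₀ y₀`,
`yₙ₊₁' = rₙ yₙ - rₙ₊₁ yₙ₊₁` as soon as `e (n+1) k * (r (n+1) - r k) = r n * e n k`; for
`e n k = a (n-k) * b k` and `r k = c⁻ᵏ` this is the recurrence `a (m+1) (c^(m+1) - 1) = -c a m`.
The initial values `∑ₖ a (n-k) b k = δₙ₀` say that the Toeplitz matrices of `a` and `b` are
mutually inverse: for `A = ∑ aₘ Xᵐ` and `B = ∑ bₘ Xᵐ` the recurrences read `A(cX) = (1 - cX) A(X)`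
and `B(X) = (1 - cX) B(cX)`, so `AB` is invariant under `X ↦ cX`, hence constant because `c` is not
a root of unity. The system is triangular, so its solution is unique, one equation at a time.
-/

open Finset Real

theorem eq_of_hasDerivAt_sub_mul {f g h : ℝ → ℝ} {μ a : ℝ}
    (hf : ∀ s, a ≤ s → HasDerivAt f (h s - μ * f s) s)
    (hg : ∀ s, a ≤ s → HasDerivAt g (h s - μ * g s) s)
    (ha : f a = g a) {t : ℝ} (ht : a ≤ t) : f t = g t := by
  have hv (s : ℝ) : LipschitzWith ‖μ‖₊ fun x : ℝ => h s - μ * x :=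
    LipschitzWith.of_dist_le_mul fun x x' => by
      rw [Real.dist_eq, Real.dist_eq, coe_nnnorm, Real.norm_eq_abs, ← abs_mul,
        show h s - μ * x - (h s - μ * x') = -(μ * (x - x')) by ring, abs_neg]
  refine ODE_solution_unique (v := fun s x => h s - μ * x) hv ?_ ?_ ?_ ?_ ha ⟨ht, le_rfl⟩
  · exact HasDerivAt.continuousOn fun s hs => hf s hs.1
  · exact fun s hs => (hf s hs.1).hasDerivWithinAt
  · exact HasDerivAt.continuousOn fun s hs => hg s hs.1
  · exact fun s hs => (hg s hs.1).hasDerivWithinAt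

def IsPureBirthSolution (r : ℕ → ℝ) (y : ℕ → ℝ → ℝ) : Prop :=
  (∀ t, 0 ≤ t → HasDerivAt (y 0) (-r 0 * y 0 t) t) ∧
    ∀ n t, 0 ≤ t → HasDerivAt (y (n + 1)) (r n * y n t - r (n + 1) * y (n + 1) t) t

theorem IsPureBirthSolution.unique {r : ℕ → ℝ} {y z : ℕ → ℝ → ℝ} (hy : IsPureBirthSolution r y)
    (hz : IsPureBirthSolution r z) (h0 : ∀ n, y n 0 = z n 0) (n : ℕ) {t : ℝ} (ht : 0 ≤ t) :
    y n t = z n t := by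
  induction n generalizing t with
  | zero =>
    exact eq_of_hasDerivAt_sub_mul (h := 0) (by simpa using hy.1) (by simpa using hz.1) (h0 0) ht
  | succ n ih =>
    refine eq_of_hasDerivAt_sub_mul (h := fun s => r n * y n s) (hy.2 n) (fun s hs => ?_) (h0 _) ht
    simpa only [ih hs] using hz.2 n s hs

noncomputable def expSum (r : ℕ → ℝ) (e : ℕ → ℕ → ℝ) (n : ℕ) (t : ℝ) : ℝ :=
  ∑ k ∈ range (n + 1), e n k * exp (-r k * t)

theorem hasDerivAt_expSum (r : ℕ → ℝ) (e : ℕ → ℕ → ℝ) (n : ℕ) (t : ℝ) :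
    HasDerivAt (expSum r e n) (∑ k ∈ range (n + 1), -r k * (e n k * exp (-r k * t))) t :=
  HasDerivAt.fun_sum fun k _ =>
    ((((hasDerivAt_id' t).const_mul (-r k)).exp).const_mul (e n k)).congr_deriv (by ring)

theorem isPureBirthSolution_expSum {r : ℕ → ℝ} {e : ℕ → ℕ → ℝ}
    (he : ∀ n k, k ≤ n → e (n + 1) k * (r (n + 1) - r k) = r n * e n k) :
    IsPureBirthSolution r (expSum r e) := by
  refine ⟨fun t _ => ?_, fun n t _ => ?_⟩
  · simpa [expSum] using hasDerivAt_expSum r e 0 t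
  · convert hasDerivAt_expSum r e (n + 1) t using 1
    have hterm : ∀ k ∈ range (n + 1), -r k * (e (n + 1) k * exp (-r k * t)) =
        r n * (e n k * exp (-r k * t)) - r (n + 1) * (e (n + 1) k * exp (-r k * t)) :=
      fun k hk => by linear_combination exp (-r k * t) * he n k (mem_range_succ_iff.1 hk)
    rw [sum_range_succ, sum_congr rfl hterm, sum_sub_distrib, ← mul_sum, ← mul_sum, expSum, expSum,
      sum_range_succ _ (n + 1)]
    ring

section Coefficients

variable {K : Type*} [Field K] {c : K}

theorem prod_Icc_pow_sub_one_ne_zero (hc : ∀ l, c ^ (l + 1) ≠ 1) (k : ℕ) :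
    ∏ l ∈ Icc 1 k, (c ^ l - 1) ≠ 0 :=
  prod_ne_zero_iff.2 fun l hl => by
    obtain ⟨m, rfl⟩ := Nat.exists_eq_add_of_le' (mem_Icc.1 hl).1
    exact sub_ne_zero.2 (hc m)

theorem recurrence_of_eq_neg_pow_div_prod (hc : ∀ l, c ^ (l + 1) ≠ 1) {a : ℕ → K}
    (ha0 : a 0 = 1)
    (ha : ∀ k, 1 ≤ k → a k = (-1) ^ k * c ^ k / ∏ l ∈ Icc 1 k, (c ^ l - 1)) (m : ℕ) :
    a (m + 1) * (c ^ (m + 1) - 1) = -(c * a m) := by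
  have ha_all : ∀ k, a k = (-1) ^ k * c ^ k / ∏ l ∈ Icc 1 k, (c ^ l - 1) := fun k =>
    k.eq_zero_or_pos.elim (fun hk => by simp [hk, ha0]) (ha k)
  have hP := prod_Icc_pow_sub_one_ne_zero hc m
  have hm := sub_ne_zero.2 (hc m)
  rw [ha_all, ha_all, prod_Icc_succ_top (by omega)]
  field_simp
  ring

theorem recurrence_of_eq_prod_pow_div_prod (hc : ∀ l, c ^ (l + 1) ≠ 1) {b : ℕ → K}
    (hb0 : b 0 = 1)
    (hb : ∀ k, 1 ≤ k → b k = (∏ l ∈ Icc 1 k, c ^ l) / ∏ l ∈ Icc 1 k, (c ^ l - 1)) (m : ℕ) :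
    b (m + 1) * (c ^ (m + 1) - 1) = c ^ (m + 1) * b m := by
  have hb_all : ∀ k, b k = (∏ l ∈ Icc 1 k, c ^ l) / ∏ l ∈ Icc 1 k, (c ^ l - 1) := fun k =>
    k.eq_zero_or_pos.elim (fun hk => by simp [hk, hb0]) (hb k)
  have hP := prod_Icc_pow_sub_one_ne_zero hc m
  have hm := sub_ne_zero.2 (hc m)
  rw [hb_all, hb_all, prod_Icc_succ_top (by omega), prod_Icc_succ_top (by omega)]
  field_simp

theorem mul_zpow_sub_zpow_eq_of_recurrence (hc : c ≠ 0) {a : ℕ → K}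
    (ha : ∀ m, a (m + 1) * (c ^ (m + 1) - 1) = -(c * a m)) {n k : ℕ} (hk : k ≤ n) :
    a (n + 1 - k) * (c ^ (-((n + 1 : ℕ) : ℤ)) - c ^ (-(k : ℤ))) = c ^ (-(n : ℤ)) * a (n - k) := by
  obtain ⟨m, rfl⟩ := Nat.exists_eq_add_of_le hk
  rw [show k + m + 1 - k = m + 1 by omega, Nat.add_sub_cancel_left]
  simp only [zpow_neg, zpow_natCast]
  field_simp
  linear_combination (-(c ^ k * c ^ (k + m))) * ha m

open PowerSeries in
theorem sum_range_mul_eq_zero_of_recurrence {a b : ℕ → K}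
    (ha : ∀ m, a (m + 1) * (c ^ (m + 1) - 1) = -(c * a m))
    (hb : ∀ m, b (m + 1) * (c ^ (m + 1) - 1) = c ^ (m + 1) * b m)
    {n : ℕ} (hn : c ^ n ≠ 1) :
    ∑ k ∈ range (n + 1), a (n - k) * b k = 0 := by
  set A := PowerSeries.mk a
  set B := PowerSeries.mk b
  have hA : rescale c A = (1 - C c * X) * A := by
    ext (_ | m)
    · simp [A]
    · simp only [A, coeff_rescale, coeff_mk, sub_mul, one_mul, mul_assoc, map_sub, coeff_C_mul,
        coeff_succ_X_mul]
      linear_combination ha m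
  have hB : B = (1 - C c * X) * rescale c B := by
    ext (_ | m)
    · simp [B, rescale_mk]
    · simp only [B, coeff_rescale, coeff_mk, sub_mul, one_mul, mul_assoc, map_sub, coeff_C_mul,
        coeff_succ_X_mul]
      linear_combination -(hb m)
  have hfix : rescale c (B * A) = B * A := by
    calc rescale c (B * A) = ((1 - C c * X) * rescale c B) * A := by
          rw [map_mul, hA]; ring
      _ = B * A := by rw [← hB]
  have hcoeff : (c ^ n - 1) * coeff n (B * A) = 0 := by
    have h := congrArg (coeff n) hfix
    rw [coeff_rescale] at h
    linear_combination h
  have hzero := (mul_eq_zero.1 hcoeff).resolve_left (sub_ne_zero.2 hn)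
  rw [coeff_mul, Nat.sum_antidiagonal_eq_sum_range_succ (fun i j => coeff i B * coeff j A)] at hzero
  simpa [A, B, mul_comm] using hzero

end Coefficients

theorem aldous_shields_ode_solution (c : ℝ) (hc : 1 < c) (a b : ℕ → ℝ)
    (ha0 : a 0 = 1)
    (ha : ∀ k : ℕ, 1 ≤ k →
      a k = (-1 : ℝ) ^ k * c ^ k / ∏ l ∈ Finset.Icc 1 k, (c ^ l - 1))
    (hb0 : b 0 = 1)
    (hb : ∀ k : ℕ, 1 ≤ k →
      b k = (∏ l ∈ Finset.Icc 1 k, c ^ l) / ∏ l ∈ Finset.Icc 1 k, (c ^ l - 1))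
    (y : ℕ → ℝ → ℝ)
    (hy00 : y 0 0 = 1) (hyn0 : ∀ n : ℕ, 1 ≤ n → y n 0 = 0)
    (hode0 : ∀ t : ℝ, 0 ≤ t → HasDerivAt (y 0) (-(y 0 t)) t)
    (hode : ∀ n : ℕ, 1 ≤ n → ∀ t : ℝ, 0 ≤ t →
      HasDerivAt (y n) (c ^ (-((n : ℤ) - 1)) * y (n - 1) t - c ^ (-(n : ℤ)) * y n t) t)
    (n : ℕ) (t : ℝ) (ht : 0 ≤ t) :
    y n t = ∑ k ∈ Finset.range (n + 1),
      a (n - k) * b k * Real.exp (-c ^ (-(k : ℤ)) * t) := by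
  have hc_pow : ∀ l, c ^ (l + 1) ≠ 1 := fun l => (one_lt_pow₀ hc l.succ_ne_zero).ne'
  have ha_rec := recurrence_of_eq_neg_pow_div_prod hc_pow ha0 ha
  have hb_rec := recurrence_of_eq_prod_pow_div_prod hc_pow hb0 hb
  set r : ℕ → ℝ := fun k => c ^ (-(k : ℤ))
  have hy : IsPureBirthSolution r y := by
    refine ⟨fun t ht => by simpa [r] using hode0 t ht, fun n t ht => ?_⟩
    convert hode (n + 1) n.succ_pos t ht using 3 <;> push_cast <;> simp [r]
  have hz : IsPureBirthSolution r (expSum r fun n k => a (n - k) * b k) :=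
    isPureBirthSolution_expSum fun n k hk => by
      rw [mul_right_comm, mul_zpow_sub_zpow_eq_of_recurrence (by positivity) ha_rec hk, mul_assoc]
  refine hy.unique hz (fun m => ?_) n ht
  cases m with
  | zero => simp [expSum, hy00, ha0, hb0]
  | succ m =>
    simp only [expSum, mul_zero, exp_zero, mul_one]
    rw [hyn0 _ m.succ_pos, sum_range_mul_eq_zero_of_recurrence ha_rec hb_rec (hc_pow m)]
end

section
/- Let c > 1 and define a_k, b_k, b_∞ as: a_0 = b_0 = 1, a_k = (-1)^k c^k/∏_{l=1}^k(c^l-1), b_k = ∏_{l=1}^k c^l/(c^l-1), b_∞ = (∏_{l=1}^∞(1-c^{-l}))^{-1}. Fix i ∈ ℤ and t > 0. Then lim_{n→∞} ∑_{k=0}^{n+i} a_k b_{n+i-k} e^{-c^{-n-i+k} · t c^n} = b_∞ · ∑_{k=0}^∞ a_k e^{-c^{-i+k} t}. -/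
/-!
With `q = c⁻¹`, `b_N = 1 / (q; q)_N` is a reciprocal q-Pochhammer symbol, so `b_N → b_∞` and
`(b_N)` is bounded; moreover `|a_k| ≤ b_k`. Since `c ^ (-n - i + k) * (t * c ^ n)` does not depend
on `n`, the sum is `∑_{k ≤ N} a_k e_k b_{N-k}` with `N = n + i` and `e_k = exp (-c ^ (k - i) t)`
decaying doubly exponentially, and dominated convergence gives the limit `b_∞ ∑ a_k e_k`.
-/

open Finset Filter Topology Real

theorem tendsto_sum_range_mul_sub_of_summable_norm {R : Type*} [NormedRing R] [CompleteSpace R]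
    {x y : ℕ → R} {β : R} (hx : Summable (‖x ·‖)) (hy : Tendsto y atTop (𝓝 β)) :
    Tendsto (fun N => ∑ k ∈ range (N + 1), x k * y (N - k)) atTop (𝓝 ((∑' k, x k) * β)) := by
  obtain ⟨B, hB⟩ : ∃ B, ∀ n, ‖y n‖ ≤ B := by
    simpa using isBounded_iff_forall_norm_le.1 (Metric.isBounded_range_of_tendsto y hy)
  set f : ℕ → ℕ → R := fun N => (range (N + 1) : Set ℕ).indicator fun k => x k * y (N - k)
  have hf_lim : ∀ k, Tendsto (f · k) atTop (𝓝 (x k * β)) := by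
    intro k
    refine ((hy.comp (tendsto_sub_atTop_nat k)).const_mul (x k)).congr' ?_
    filter_upwards [eventually_ge_atTop k] with N hN
    have hk : k ∈ (range (N + 1) : Set ℕ) := by simp; omega
    exact (Set.indicator_of_mem hk (fun k => x k * y (N - k))).symm
  have hf_le : ∀ N k, ‖f N k‖ ≤ ‖x k‖ * B := fun N k =>
    (norm_indicator_le_norm_self (fun k => x k * y (N - k)) k).trans <|
      (norm_mul_le _ _).trans <| by gcongr; exact hB _
  rw [← hx.of_norm.tsum_mul_right]
  simpa only [f, ← sum_eq_tsum_indicator] using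
    tendsto_tsum_of_dominated_convergence (hx.mul_right B) hf_lim (.of_forall hf_le)

theorem summable_exp_neg_mul_pow {c α : ℝ} (hc : 1 < c) (hα : 0 < α) :
    Summable fun k : ℕ => exp (-(α * c ^ k)) := by
  refine (summable_geometric_of_lt_one (exp_pos _).le
    (exp_lt_one_iff.2 (by nlinarith : -(α * (c - 1)) < 0))).of_nonneg_of_le
    (fun k => (exp_pos _).le) fun k => ?_
  have hbernoulli := one_add_mul_sub_le_pow (by linarith : -1 ≤ c) k
  rw [← exp_nat_mul, exp_le_exp]
  nlinarith

theorem summable_exp_neg_zpow_add_mul {c t : ℝ} (hc : 1 < c) (ht : 0 < t) (j : ℤ) :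
    Summable fun k : ℕ => exp (-(c ^ (j + k) * t)) := by
  convert summable_exp_neg_mul_pow hc (by positivity : 0 < c ^ j * t) using 3 with k
  rw [zpow_add₀ (by positivity), zpow_natCast]
  ring

/-- The q-Pochhammer symbol `(q; q)_N = ∏_{l=1}^{N} (1 - q ^ l)`. -/
def qPochhammer {R : Type*} [CommRing R] (q : R) (N : ℕ) : R :=
  ∏ l ∈ range N, (1 - q ^ (l + 1))

section qPochhammer

variable {K : Type*} [NormedField K] {q : K}

theorem summable_norm_neg_pow_succ (hq : ‖q‖ < 1) : Summable fun l : ℕ => ‖-q ^ (l + 1)‖ := by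
  simpa [norm_pow, pow_succ'] using (summable_geometric_of_lt_one (norm_nonneg q) hq).mul_left ‖q‖

theorem tendsto_qPochhammer [CompleteSpace K] (hq : ‖q‖ < 1) :
    Tendsto (qPochhammer q) atTop (𝓝 (∏' l : ℕ, (1 - q ^ (l + 1)))) := by
  have h := (multipliable_one_add_of_summable (f := fun l : ℕ => -q ^ (l + 1))
    (summable_norm_neg_pow_succ hq)).hasProd
  simp only [← sub_eq_add_neg] at h
  exact h.tendsto_prod_nat

theorem tprod_one_sub_pow_succ_ne_zero [CompleteSpace K] (hq : ‖q‖ < 1) :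
    ∏' l : ℕ, (1 - q ^ (l + 1)) ≠ 0 := by
  simp only [sub_eq_add_neg]
  refine tprod_one_add_ne_zero_of_summable (f := fun l : ℕ => -q ^ (l + 1)) (fun l => ?_)
    (summable_norm_neg_pow_succ hq)
  rw [← sub_eq_add_neg, sub_ne_zero]
  intro h
  have := congrArg norm h
  rw [norm_one, norm_pow] at this
  exact (pow_lt_one₀ (norm_nonneg q) hq (Nat.succ_ne_zero l)).ne' this

end qPochhammer

section Coefficients

variable {c : ℝ}

theorem prod_Icc_pow_div_prod_Icc_pow_sub_one (hc : c ≠ 0) (N : ℕ) :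
    (∏ l ∈ Icc 1 N, c ^ l) / ∏ l ∈ Icc 1 N, (c ^ l - 1) = (qPochhammer c⁻¹ N)⁻¹ := by
  rw [qPochhammer, ← inv_div, ← prod_div_distrib, ← Ico_add_one_right_eq_Icc,
    prod_Ico_eq_prod_range, Nat.add_sub_cancel]
  refine congrArg _ (prod_congr rfl fun l _ => ?_)
  rw [add_comm 1 l, inv_pow]
  field_simp

theorem tendsto_prod_Icc_pow_div_prod_Icc_pow_sub_one (hc : 1 < c) :
    Tendsto (fun N => (∏ l ∈ Icc 1 N, c ^ l) / ∏ l ∈ Icc 1 N, (c ^ l - 1)) atTop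
      (𝓝 (∏' l : ℕ, (1 - c⁻¹ ^ (l + 1)))⁻¹) := by
  have hq : ‖c⁻¹‖ < 1 := by
    rw [norm_inv, Real.norm_of_nonneg (by positivity)]
    exact inv_lt_one_of_one_lt₀ hc
  simpa only [prod_Icc_pow_div_prod_Icc_pow_sub_one (by positivity : c ≠ 0)] using
    (tendsto_qPochhammer hq).inv₀ (tprod_one_sub_pow_succ_ne_zero hq)

theorem pow_le_prod_Icc_pow (hc : 1 ≤ c) (k : ℕ) : c ^ k ≤ ∏ l ∈ Icc 1 k, c ^ l := by
  rcases k.eq_zero_or_pos with rfl | hk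
  · simp
  rw [prod_pow_eq_pow_sum]
  exact pow_le_pow_right₀ hc <|
    single_le_sum (f := fun i : ℕ => i) (fun _ _ => Nat.zero_le _) (mem_Icc.2 ⟨hk, le_rfl⟩)

theorem abs_neg_one_pow_mul_pow_div_le (hc : 1 < c) (k : ℕ) :
    |(-1 : ℝ) ^ k * c ^ k / ∏ l ∈ Icc 1 k, (c ^ l - 1)|
      ≤ (∏ l ∈ Icc 1 k, c ^ l) / ∏ l ∈ Icc 1 k, (c ^ l - 1) := by
  have hprod : 0 < ∏ l ∈ Icc 1 k, (c ^ l - 1) :=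
    prod_pos fun l hl => sub_pos.2 <| one_lt_pow₀ hc (by simp at hl; omega)
  rw [abs_div, abs_mul, abs_pow, abs_neg, abs_one, one_pow, one_mul, abs_of_pos hprod,
    abs_of_pos (by positivity)]
  exact div_le_div_of_nonneg_right (pow_le_prod_Icc_pow hc.le k) hprod.le

end Coefficients

theorem aldous_shields_profile_limit (c : ℝ) (hc : 1 < c) (a b : ℕ → ℝ)
    (ha0 : a 0 = 1)
    (ha : ∀ k : ℕ, 1 ≤ k →
      a k = (-1 : ℝ) ^ k * c ^ k / ∏ l ∈ Finset.Icc 1 k, (c ^ l - 1))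
    (hb0 : b 0 = 1)
    (hb : ∀ k : ℕ, 1 ≤ k →
      b k = (∏ l ∈ Finset.Icc 1 k, c ^ l) / ∏ l ∈ Finset.Icc 1 k, (c ^ l - 1))
    (binf : ℝ) (hbinf : binf = (∏' l : ℕ, (1 - c⁻¹ ^ (l + 1)))⁻¹)
    (i : ℤ) (t : ℝ) (ht : 0 < t) :
    Tendsto (fun n : ℕ => ∑ k ∈ Finset.range (((n : ℤ) + i).toNat + 1),
        a k * b (((n : ℤ) + i - (k : ℤ)).toNat) *
          Real.exp (-(c ^ (-(n : ℤ) - i + (k : ℤ)) * (t * c ^ n))))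
      atTop (𝓝 (binf * ∑' k : ℕ, a k * Real.exp (-(c ^ (-i + (k : ℤ)) * t)))) := by
  have hb_lim : Tendsto b atTop (𝓝 binf) := by
    rw [hbinf]
    refine (tendsto_prod_Icc_pow_div_prod_Icc_pow_sub_one hc).congr' ?_
    filter_upwards [eventually_ge_atTop 1] with N hN
    exact (hb N hN).symm
  have ha_le : ∀ k, |a k| ≤ b k := by
    rintro (_ | k)
    · simp [ha0, hb0]
    · rw [ha _ k.succ_pos, hb _ k.succ_pos]
      exact abs_neg_one_pow_mul_pow_div_le hc _
  obtain ⟨B, hB⟩ := hb_lim.bddAbove_range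
  have hsum : Summable fun k : ℕ => ‖a k * exp (-(c ^ (-i + k) * t))‖ := by
    refine ((summable_exp_neg_zpow_add_mul hc ht (-i)).mul_left B).of_nonneg_of_le
      (fun k => norm_nonneg _) fun k => ?_
    rw [norm_mul, Real.norm_of_nonneg (exp_pos _).le, Real.norm_eq_abs]
    gcongr
    exact (ha_le k).trans (hB (Set.mem_range_self k))
  have hN : Tendsto (fun n : ℕ => ((n : ℤ) + i).toNat) atTop atTop :=
    tendsto_atTop_atTop.2 fun N => ⟨N + i.natAbs, fun n hn => by omega⟩
  rw [mul_comm]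
  refine ((tendsto_sum_range_mul_sub_of_summable_norm hsum hb_lim).comp hN).congr
    fun n => sum_congr rfl fun k hk => ?_
  have hexp : c ^ (-(n : ℤ) - i + k) * (t * c ^ n) = c ^ (-i + k) * t := by
    rw [← zpow_natCast c n, mul_left_comm, ← zpow_add₀ (by positivity)]
    ring_nf
  have hidx : ((n : ℤ) + i - k).toNat = ((n : ℤ) + i).toNat - k := by
    simp only [mem_range] at hk
    omega
  rw [hexp, hidx]
  ring
end

section
/- Let c > 1 and a_k, b_∞ as usual (a_0 = 1, a_k = (-1)^k c^k/∏_{l=1}^k(c^l-1), b_∞ = (∏_{l=1}^∞(1-c^{-l}))^{-1}). For each i ∈ ℤ and t > 0, the series ∑_{k=0}^∞ a_k e^{-c^{-i+k} t} converges absolutely, and its value lies in [0, 1/b_∞], i.e. b_∞ ∑_{k=0}^∞ a_k e^{-c^{-i+k}t} ∈ [0,1]. -/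
/-!
With q = c⁻¹, the approximant g_n(u) = ∑_{i+j=n} a_i / (q;q)_j · e^{-c^i u} is the density of a
sum of independent exponential variables of rates 1, c, …, c^n. Analytically: g_0(u) = e^{-u},
g_{n+1}' = c^{n+1} (g_n - g_{n+1}), and g_{n+1}(0) = 0 by the q-binomial identity
∑_{i+j=m} a_i / (q;q)_j = 0 (m ≥ 1). This differential equation keeps every g_n between 0 and 1
on [0, ∞). The a_k decay super-geometrically, so by Tannery's theorem, as (q;q)_j → (q;q)_∞ = 1/b_∞,
g_n(u) → b_∞ ∑_k a_k e^{-c^k u}.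
-/

open Finset Real Filter Topology

lemma le_of_hasDerivAt_nonneg {f f' : ℝ → ℝ} (hf : ∀ x, HasDerivAt f (f' x) x)
    (hf' : ∀ x, 0 ≤ x → 0 ≤ f' x) {u : ℝ} (hu : 0 ≤ u) : f 0 ≤ f u :=
  monotoneOn_of_hasDerivWithinAt_nonneg (convex_Ici 0)
    (fun x _ => (hf x).continuousAt.continuousWithinAt) (fun x _ => (hf x).hasDerivWithinAt)
    (fun x hx => hf' x (interior_subset hx)) Set.self_mem_Ici hu hu

lemma abs_mul_exp_neg_le (a : ℝ) {x : ℝ} (hx : 0 ≤ x) : |a * exp (-x)| ≤ |a| := by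
  rw [abs_mul, abs_exp]
  exact mul_le_of_le_one_right (abs_nonneg a) (exp_le_one_iff.mpr (neg_nonpos.mpr hx))

namespace AldousShields

noncomputable def coeff (c : ℝ) (k : ℕ) : ℝ :=
  (-1) ^ k * c ^ k / ∏ l ∈ Icc 1 k, (c ^ l - 1)

/-- The q-Pochhammer symbol (q;q)_n at q = c⁻¹. -/
noncomputable def qPoch (c : ℝ) (n : ℕ) : ℝ :=
  ∏ l ∈ range n, (1 - c⁻¹ ^ (l + 1))

noncomputable def approx (c : ℝ) (n : ℕ) (u : ℝ) : ℝ :=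
  ∑ p ∈ antidiagonal n, coeff c p.1 / qPoch c p.2 * exp (-(c ^ p.1 * u))

variable {c : ℝ}

lemma one_sub_inv_pow_pos (hc : 1 < c) {l : ℕ} (hl : l ≠ 0) : 0 < 1 - c⁻¹ ^ l :=
  sub_pos.mpr (pow_lt_one₀ (by positivity) (inv_lt_one_of_one_lt₀ hc) hl)

lemma coeff_zero (c : ℝ) : coeff c 0 = 1 := by simp [coeff]

lemma coeff_succ (c : ℝ) (k : ℕ) : coeff c (k + 1) = -c / (c ^ (k + 1) - 1) * coeff c k := by
  rw [coeff, coeff, prod_Icc_succ_top (by omega), div_mul_div_comm]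
  ring

lemma coeff_succ_mul_one_sub (hc : 1 < c) (k : ℕ) :
    coeff c (k + 1) * (1 - c⁻¹ ^ (k + 1)) = -(c⁻¹ ^ k * coeff c k) := by
  have hck : c ^ (k + 1) - 1 ≠ 0 := (sub_pos.mpr (one_lt_pow₀ hc (by omega))).ne'
  rw [coeff_succ, inv_pow, inv_pow]
  field_simp
  ring

lemma coeff_ne_zero (hc : 1 < c) (k : ℕ) : coeff c k ≠ 0 := by
  refine div_ne_zero (by positivity) (prod_ne_zero_iff.mpr fun l hl => ?_)
  exact (sub_pos.mpr (one_lt_pow₀ hc (by simp at hl; omega))).ne'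

lemma summable_abs_coeff (hc : 1 < c) : Summable fun k => |coeff c k| := by
  refine summable_of_ratio_test_tendsto_lt_one zero_lt_one
    (Eventually.of_forall fun k => by simpa using coeff_ne_zero hc k) ?_
  have hratio : Tendsto (fun k : ℕ => ‖-c / (c ^ (k + 1) - 1)‖) atTop (𝓝 0) := by
    have hden : Tendsto (fun k : ℕ => c ^ (k + 1) - 1) atTop atTop :=
      tendsto_atTop_add_const_right _ _
        ((tendsto_pow_atTop_atTop_of_one_lt hc).comp (tendsto_add_atTop_nat 1))
    simpa using (tendsto_const_nhds.div_atTop hden).norm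
  refine hratio.congr fun k => ?_
  rw [norm_abs_eq_norm, norm_abs_eq_norm, coeff_succ, norm_mul,
    mul_div_cancel_right₀ _ (norm_ne_zero_iff.mpr (coeff_ne_zero hc k))]

lemma qPoch_zero (c : ℝ) : qPoch c 0 = 1 := by simp [qPoch]

lemma qPoch_succ (c : ℝ) (n : ℕ) : qPoch c (n + 1) = qPoch c n * (1 - c⁻¹ ^ (n + 1)) :=
  prod_range_succ _ n

lemma qPoch_pos (hc : 1 < c) (n : ℕ) : 0 < qPoch c n :=
  prod_pos fun l _ => one_sub_inv_pow_pos hc (by omega)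

lemma qPoch_antitone (hc : 1 < c) : Antitone (qPoch c) := by
  refine antitone_nat_of_succ_le fun n => ?_
  rw [qPoch_succ]
  exact mul_le_of_le_one_right (qPoch_pos hc n).le (by simp; positivity)

lemma summable_log_one_sub_inv_pow (hc : 1 < c) :
    Summable fun l : ℕ => log (1 - c⁻¹ ^ (l + 1)) := by
  have h : Summable fun l : ℕ => -c⁻¹ ^ (l + 1) :=
    ((summable_nat_add_iff 1).mpr
      (summable_geometric_of_lt_one (by positivity) (inv_lt_one_of_one_lt₀ hc))).neg
  simpa [sub_eq_add_neg] using Real.summable_log_one_add_of_summable h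

lemma tendsto_qPoch (hc : 1 < c) :
    Tendsto (qPoch c) atTop (𝓝 (∏' l : ℕ, (1 - c⁻¹ ^ (l + 1)))) :=
  (Real.multipliable_of_summable_log (fun _ => one_sub_inv_pow_pos hc (by omega))
    (summable_log_one_sub_inv_pow hc)).hasProd.tendsto_prod_nat

lemma tprod_one_sub_inv_pow_pos (hc : 1 < c) : 0 < ∏' l : ℕ, (1 - c⁻¹ ^ (l + 1)) := by
  rw [← Real.rexp_tsum_eq_tprod (fun _ => one_sub_inv_pow_pos hc (by omega))
    (summable_log_one_sub_inv_pow hc)]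
  exact exp_pos _

lemma tprod_one_sub_inv_pow_le_qPoch (hc : 1 < c) (n : ℕ) :
    ∏' l : ℕ, (1 - c⁻¹ ^ (l + 1)) ≤ qPoch c n :=
  (qPoch_antitone hc).le_of_tendsto (tendsto_qPoch hc) n

lemma sum_antidiagonal_succ_mul_one_sub (hc : 1 < c) (m : ℕ) :
    (∑ p ∈ antidiagonal (m + 1), coeff c p.1 / qPoch c p.2) * (1 - c⁻¹ ^ (m + 1)) =
      (∑ p ∈ antidiagonal m, coeff c p.1 / qPoch c p.2) * (1 - c⁻¹ ^ m) := by
  have hsplit : ∀ p ∈ antidiagonal (m + 1), coeff c p.1 / qPoch c p.2 * (1 - c⁻¹ ^ (m + 1)) =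
      coeff c p.1 * (1 - c⁻¹ ^ p.2) / qPoch c p.2 +
        c⁻¹ ^ p.2 * (coeff c p.1 * (1 - c⁻¹ ^ p.1)) / qPoch c p.2 := by
    intro p hp
    rw [HasAntidiagonal.mem_antidiagonal] at hp
    rw [← hp, pow_add]
    ring
  rw [sum_mul, sum_congr rfl hsplit, sum_add_distrib, Nat.sum_antidiagonal_succ',
    Nat.sum_antidiagonal_succ]
  simp only [pow_zero, sub_self, mul_zero, zero_div, zero_add, coeff_succ_mul_one_sub hc,
    qPoch_succ]
  rw [mul_sub, mul_one, sub_eq_add_neg, sum_mul, ← sum_neg_distrib]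
  congr 1 <;> refine sum_congr rfl fun p hp => ?_
  · exact mul_div_mul_right _ _ (one_sub_inv_pow_pos hc p.2.succ_ne_zero).ne'
  · rw [HasAntidiagonal.mem_antidiagonal] at hp
    rw [← hp, pow_add]
    ring

lemma sum_antidiagonal_coeff_div_qPoch (hc : 1 < c) (m : ℕ) :
    ∑ p ∈ antidiagonal (m + 1), coeff c p.1 / qPoch c p.2 = 0 := by
  induction m with
  | zero =>
    have hrec := sum_antidiagonal_succ_mul_one_sub hc 0
    simp only [pow_zero, sub_self, mul_zero] at hrec
    exact (mul_eq_zero.mp hrec).resolve_right (one_sub_inv_pow_pos hc one_ne_zero).ne'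
  | succ m ih =>
    have hrec := sum_antidiagonal_succ_mul_one_sub hc (m + 1)
    rw [ih, zero_mul] at hrec
    exact (mul_eq_zero.mp hrec).resolve_right (one_sub_inv_pow_pos hc (Nat.succ_ne_zero _)).ne'

lemma approx_zero (c u : ℝ) : approx c 0 u = exp (-u) := by simp [approx, coeff_zero, qPoch_zero]

lemma approx_succ_eval_zero (hc : 1 < c) (n : ℕ) : approx c (n + 1) 0 = 0 := by
  simpa [approx] using sum_antidiagonal_coeff_div_qPoch hc n

lemma hasDerivAt_approx (c : ℝ) (n : ℕ) (u : ℝ) :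
    HasDerivAt (approx c n)
      (-∑ p ∈ antidiagonal n, coeff c p.1 / qPoch c p.2 * (c ^ p.1 * exp (-(c ^ p.1 * u)))) u := by
  rw [← sum_neg_distrib]
  refine HasDerivAt.fun_sum fun p _ => ?_
  refine ((((hasDerivAt_id u).const_mul (c ^ p.1)).neg.exp).const_mul
    (coeff c p.1 / qPoch c p.2)).congr_deriv ?_
  simp only [Pi.neg_apply, id, mul_one]
  ring

lemma pow_mul_approx_succ_sub (hc : 1 < c) (n : ℕ) (u : ℝ) :
    c ^ (n + 1) * approx c (n + 1) u -
        ∑ p ∈ antidiagonal (n + 1), coeff c p.1 / qPoch c p.2 * (c ^ p.1 * exp (-(c ^ p.1 * u))) =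
      c ^ (n + 1) * approx c n u := by
  rw [approx, approx, mul_sum, mul_sum, ← sum_sub_distrib, Nat.sum_antidiagonal_succ']
  dsimp only
  rw [mul_left_comm, sub_self, zero_add]
  refine sum_congr rfl fun p hp => ?_
  rw [HasAntidiagonal.mem_antidiagonal] at hp
  have hrate : c ^ (n + 1) - c ^ p.1 = c ^ (n + 1) * (1 - c⁻¹ ^ (p.2 + 1)) := by
    rw [← hp, inv_pow]
    field_simp
    ring
  have h1 : 1 - c⁻¹ ^ (p.2 + 1) ≠ 0 := (one_sub_inv_pow_pos hc p.2.succ_ne_zero).ne'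
  calc _ = coeff c p.1 / qPoch c p.2 * exp (-(c ^ p.1 * u)) / (1 - c⁻¹ ^ (p.2 + 1)) *
        (c ^ (n + 1) - c ^ p.1) := by rw [qPoch_succ, ← div_div]; ring
    _ = _ := by
      rw [hrate]
      generalize 1 - c⁻¹ ^ (p.2 + 1) = x at h1 ⊢
      field_simp

lemma hasDerivAt_exp_mul_approx_succ (hc : 1 < c) (n : ℕ) (u : ℝ) :
    HasDerivAt (fun s => exp (c ^ (n + 1) * s) * approx c (n + 1) s)
      (exp (c ^ (n + 1) * u) * (c ^ (n + 1) * approx c n u)) u := by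
  refine (((hasDerivAt_id u).const_mul (c ^ (n + 1))).exp.mul
    (hasDerivAt_approx c (n + 1) u)).congr_deriv ?_
  rw [← pow_mul_approx_succ_sub hc]
  simp only [id, mul_one]
  ring

lemma approx_mem_Icc (hc : 1 < c) (n : ℕ) {u : ℝ} (hu : 0 ≤ u) : approx c n u ∈ Set.Icc 0 1 := by
  induction n generalizing u with
  | zero =>
    rw [approx_zero]
    exact ⟨(exp_pos _).le, exp_le_one_iff.mpr (by linarith)⟩
  | succ n ih =>
    -- e^{λs} g_{n+1}(s) and e^{λs} (1 - g_{n+1}(s)) are nondecreasing on [0, ∞), for λ = c^{n+1}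
    have hφ := hasDerivAt_exp_mul_approx_succ hc n
    have hlower := le_of_hasDerivAt_nonneg hφ (fun s hs => by have := (ih hs).1; positivity) hu
    have hupper := le_of_hasDerivAt_nonneg
      (fun s => ((hasDerivAt_id s).const_mul (c ^ (n + 1))).exp.sub (hφ s))
      (fun s hs => by
        have := sub_nonneg.mpr (ih hs).2
        simp only [id, mul_one, ← mul_sub, ← mul_one_sub]
        positivity) hu
    simp only [Pi.sub_apply, id_eq, mul_zero, exp_zero, approx_succ_eval_zero hc] at hlower hupper
    have he := exp_pos (c ^ (n + 1) * u)
    constructor <;> nlinarith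

lemma tendsto_approx (hc : 1 < c) {u : ℝ} (hu : 0 ≤ u) :
    Tendsto (fun n => approx c n u) atTop
      (𝓝 (∑' k, (∏' l : ℕ, (1 - c⁻¹ ^ (l + 1)))⁻¹ * (coeff c k * exp (-(c ^ k * u))))) := by
  set P := ∏' l : ℕ, (1 - c⁻¹ ^ (l + 1))
  have hP : 0 < P := tprod_one_sub_inv_pow_pos hc
  let F : ℕ → ℕ → ℝ := fun n k =>
    if k ≤ n then (qPoch c (n - k))⁻¹ * (coeff c k * exp (-(c ^ k * u))) else 0
  have happrox : ∀ n, approx c n u = ∑' k, F n k := by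
    intro n
    rw [tsum_eq_sum (s := range (n + 1)) fun k hk => if_neg (by simpa using hk), approx,
      Nat.sum_antidiagonal_eq_sum_range_succ fun i j => coeff c i / qPoch c j * exp (-(c ^ i * u))]
    refine sum_congr rfl fun k hk => ?_
    rw [if_pos (Nat.lt_succ_iff.mp (mem_range.mp hk))]
    ring
  simp only [happrox]
  refine tendsto_tsum_of_dominated_convergence (bound := fun k => P⁻¹ * |coeff c k|)
    ((summable_abs_coeff hc).mul_left _) (fun k => ?_) (Eventually.of_forall fun n k => ?_)
  · have hQ : Tendsto (fun n => qPoch c (n - k)) atTop (𝓝 P) :=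
      (tendsto_qPoch hc).comp (tendsto_sub_atTop_nat k)
    refine ((hQ.inv₀ hP.ne').mul_const _).congr' ?_
    filter_upwards [eventually_ge_atTop k] with n hn
    simp [F, hn]
  · simp only [F]
    split_ifs
    · rw [norm_mul, norm_inv, Real.norm_eq_abs, Real.norm_eq_abs, abs_of_pos (qPoch_pos hc _)]
      exact mul_le_mul (inv_anti₀ hP (tprod_one_sub_inv_pow_le_qPoch hc _))
        (abs_mul_exp_neg_le _ (by positivity)) (abs_nonneg _) (inv_nonneg.mpr hP.le)
    · rw [norm_zero]
      positivity

end AldousShields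

theorem limit_profile_in_unit_interval (c : ℝ) (hc : 1 < c) (a : ℕ → ℝ)
    (ha0 : a 0 = 1)
    (ha : ∀ k : ℕ, 1 ≤ k →
      a k = (-1 : ℝ) ^ k * c ^ k / ∏ l ∈ Finset.Icc 1 k, (c ^ l - 1))
    (binf : ℝ) (hbinf : binf = (∏' l : ℕ, (1 - c⁻¹ ^ (l + 1)))⁻¹)
    (i : ℤ) (t : ℝ) (ht : 0 < t) :
    Summable (fun k : ℕ => |a k * Real.exp (-(c ^ (-i + (k : ℤ)) * t))|) ∧
    binf * (∑' k : ℕ, a k * Real.exp (-(c ^ (-i + (k : ℤ)) * t))) ∈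
      Set.Icc (0 : ℝ) 1 := by
  obtain rfl : a = AldousShields.coeff c := funext fun
    | 0 => by rw [ha0, AldousShields.coeff_zero]
    | k + 1 => ha (k + 1) k.succ_pos
  have hu : 0 ≤ c ^ (-i) * t := by positivity
  have hrate (k : ℕ) : c ^ (-i + (k : ℤ)) * t = c ^ k * (c ^ (-i) * t) := by
    rw [zpow_add₀ (by positivity), zpow_natCast]
    ring
  simp only [hrate, hbinf, ← tsum_mul_left]
  refine ⟨(AldousShields.summable_abs_coeff hc).of_nonneg_of_le (fun _ => abs_nonneg _)
    fun k => abs_mul_exp_neg_le _ (by positivity), ?_⟩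
  exact isClosed_Icc.mem_of_tendsto (AldousShields.tendsto_approx hc hu)
    (Eventually.of_forall fun n => AldousShields.approx_mem_Icc hc n hu)
end

section
/- Let c > 1, j, j' ∈ ℤ, and m ∈ ℕ be fixed. Then, as n → ∞, ∏_{l=0}^{m} (1 - c^{-n-j+l} - c^{-n-j'+l})^{-1} - ∏_{l=0}^{m} (1 - c^{-n-j+l} - c^{-n-j'+l} + c^{-2n-j-j'+2l})^{-1} is asymptotically equivalent to c^{-2n-j-j'} (c^{2(m+1)} - 1)/(c^2 - 1), i.e. the ratio of the two quantities tends to 1. -/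
open Finset Filter Topology

private lemma telescope_prod (p q : ℕ → ℝ) (k : ℕ) :
    ∏ i ∈ Finset.range k, p i - ∏ i ∈ Finset.range k, q i
      = ∑ l ∈ Finset.range k, (∏ i ∈ Finset.range l, p i) * (p l - q l)
          * ∏ i ∈ Finset.Ico (l + 1) k, q i := by
  induction k with
  | zero => simp
  | succ k ih =>
    have h1 : ∑ l ∈ Finset.range k, (∏ i ∈ Finset.range l, p i) * (p l - q l)
          * ∏ i ∈ Finset.Ico (l + 1) (k + 1), q i
        = (∑ l ∈ Finset.range k, (∏ i ∈ Finset.range l, p i) * (p l - q l)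
          * ∏ i ∈ Finset.Ico (l + 1) k, q i) * q k := by
      rw [Finset.sum_mul]
      refine Finset.sum_congr rfl fun l hl => ?_
      rw [Finset.prod_Ico_succ_top (by simpa using Finset.mem_range.mp hl)]
      ring
    rw [Finset.sum_range_succ, h1, ← ih, Finset.prod_range_succ, Finset.prod_range_succ,
      Finset.Ico_self, Finset.prod_empty]
    ring

theorem laplace_product_difference_asymptotics (c : ℝ) (hc : 1 < c)
    (j j' : ℤ) (m : ℕ) :
    Tendsto (fun n : ℕ =>
        ((∏ l ∈ Finset.range (m + 1),
            (1 - c ^ (-(n : ℤ) - j + (l : ℤ)) - c ^ (-(n : ℤ) - j' + (l : ℤ)))⁻¹)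
          - ∏ l ∈ Finset.range (m + 1),
            (1 - c ^ (-(n : ℤ) - j + (l : ℤ)) - c ^ (-(n : ℤ) - j' + (l : ℤ))
              + c ^ (-2 * (n : ℤ) - j - j' + 2 * (l : ℤ)))⁻¹)
        / (c ^ (-2 * (n : ℤ) - j - j') * ((c ^ (2 * (m + 1)) - 1) / (c ^ 2 - 1))))
      atTop (𝓝 1) := by
  have hc0 : (0:ℝ) < c := lt_trans one_pos hc
  have hcne : c ≠ 0 := ne_of_gt hc0
  -- auxiliary functions of a real variable x (thought of as c^{-n})
  set u : ℕ → ℝ → ℝ := fun l x => c ^ (-j + (l:ℤ)) * x + c ^ (-j' + (l:ℤ)) * x with hu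
  set v : ℕ → ℝ → ℝ := fun l x => c ^ (-j - j' + 2*(l:ℤ)) * x ^ 2 with hv
  set S : ℝ → ℝ := fun x => ∑ l ∈ Finset.range (m+1), c ^ (-j - j' + 2*(l:ℤ)) *
      ((∏ i ∈ Finset.range l, (1 - u i x)⁻¹)
        * ((1 - u l x)⁻¹ * (1 - u l x + v l x)⁻¹)
        * ∏ i ∈ Finset.Ico (l+1) (m+1), (1 - u i x + v i x)⁻¹) with hS
  set t : ℕ → ℝ := fun n => c ^ (-(n:ℤ)) with htdef
  set κ : ℝ := (c ^ (2 * (m + 1)) - 1) / (c ^ 2 - 1) with hκ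
  set D : ℝ := c ^ (-j - j') * κ with hD
  -- κ as a geometric sum
  have hc2 : (1:ℝ) < c ^ 2 := one_lt_pow₀ hc (by norm_num)
  have hκsum : κ = ∑ l ∈ Finset.range (m+1), (c ^ 2) ^ l := by
    rw [hκ, geom_sum_eq (ne_of_gt hc2), ← pow_mul]
  have hκpos : 0 < κ := by
    rw [hκsum]
    exact Finset.sum_pos (fun i _ => pow_pos (by positivity) i) (by simp)
  have hDpos : 0 < D := mul_pos (zpow_pos hc0 _) hκpos
  have hDsum : D = ∑ l ∈ Finset.range (m+1), c ^ (-j - j' + 2*(l:ℤ)) := by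
    rw [hD, hκsum, Finset.mul_sum]
    refine Finset.sum_congr rfl fun l _ => ?_
    rw [zpow_add₀ hcne]
    congr 1
    rw [show (2*(l:ℤ)) = ((2*l : ℕ) : ℤ) by push_cast; ring, zpow_natCast, pow_mul]
  -- t tends to 0
  have ht0 : Tendsto t atTop (𝓝 0) := by
    have : t = fun n : ℕ => (c⁻¹) ^ n := by
      funext n
      simp only [htdef, zpow_neg, zpow_natCast, inv_pow]
    rw [this]
    exact tendsto_pow_atTop_nhds_zero_of_lt_one (by positivity) (inv_lt_one_of_one_lt₀ hc)
  -- S tends to D at 0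
  have hSlim : Tendsto S (𝓝 0) (𝓝 D) := by
    have hval : D = ∑ l ∈ Finset.range (m+1), c ^ (-j - j' + 2*(l:ℤ)) *
        ((∏ i ∈ Finset.range l, (1:ℝ)) * (1 * 1) * ∏ i ∈ Finset.Ico (l+1) (m+1), (1:ℝ)) := by
      simpa using hDsum
    rw [hS, hval]
    refine tendsto_finset_sum _ fun l _ => Tendsto.const_mul _ ?_
    have hul : ∀ i : ℕ, Tendsto (fun x : ℝ => 1 - u i x) (𝓝 0) (𝓝 1) := by
      intro i
      have : Tendsto (fun x : ℝ => u i x) (𝓝 0) (𝓝 0) := by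
        rw [hu]
        simpa using ((tendsto_id (x := 𝓝 (0:ℝ))).const_mul (c ^ (-j + (i:ℤ)))).add
          ((tendsto_id (x := 𝓝 (0:ℝ))).const_mul (c ^ (-j' + (i:ℤ))))
      simpa using tendsto_const_nhds.sub this
    have huvl : ∀ i : ℕ, Tendsto (fun x : ℝ => 1 - u i x + v i x) (𝓝 0) (𝓝 1) := by
      intro i
      have hvl : Tendsto (fun x : ℝ => v i x) (𝓝 0) (𝓝 0) := by
        rw [hv]
        simpa using (((tendsto_id (x := 𝓝 (0:ℝ))).pow 2).const_mul (c ^ (-j - j' + 2*(i:ℤ))))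
      simpa using (hul i).add hvl
    refine Tendsto.mul (Tendsto.mul ?_ ?_) ?_
    · exact tendsto_finset_prod _ fun i _ => by simpa using (hul i).inv₀ one_ne_zero
    · simpa using (((hul l).inv₀ one_ne_zero)).mul (((huvl l).inv₀ one_ne_zero))
    · exact tendsto_finset_prod _ fun i _ => by simpa using (huvl i).inv₀ one_ne_zero
  -- eventual equality of the given sequence with S ∘ t / D
  have hev : ∀ᶠ n : ℕ in atTop, ∀ l ∈ Finset.range (m+1),
      1 - u l (t n) ≠ 0 ∧ 1 - u l (t n) + v l (t n) ≠ 0 := by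
    rw [Filter.eventually_all_finset]
    intro l _
    have h1 : Tendsto (fun n => 1 - u l (t n)) atTop (𝓝 1) := by
      have : Tendsto (fun x : ℝ => u l x) (𝓝 0) (𝓝 0) := by
        rw [hu]
        simpa using ((tendsto_id (x := 𝓝 (0:ℝ))).const_mul (c ^ (-j + (l:ℤ)))).add
          ((tendsto_id (x := 𝓝 (0:ℝ))).const_mul (c ^ (-j' + (l:ℤ))))
      simpa using tendsto_const_nhds.sub (this.comp ht0)
    have h2 : Tendsto (fun n => 1 - u l (t n) + v l (t n)) atTop (𝓝 1) := by
      have : Tendsto (fun x : ℝ => v l x) (𝓝 0) (𝓝 0) := by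
        rw [hv]
        simpa using (((tendsto_id (x := 𝓝 (0:ℝ))).pow 2).const_mul (c ^ (-j - j' + 2*(l:ℤ))))
      simpa using h1.add (this.comp ht0)
    exact (h1.eventually_ne one_ne_zero).and (h2.eventually_ne one_ne_zero)
  have key : Tendsto (fun n => S (t n) / D) atTop (𝓝 1) := by
    have := (hSlim.comp ht0).div_const D
    rwa [div_self (ne_of_gt hDpos)] at this
  refine key.congr' ?_
  filter_upwards [hev] with n hn
  -- rewrite the original expression at index n
  have htn : t n = c ^ (-(n:ℤ)) := rfl
  have htn0 : t n ≠ 0 := by rw [htn]; exact zpow_ne_zero _ hcne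
  have e1 : ∀ (a : ℤ) (l : ℕ), c ^ (-(n : ℤ) - a + (l:ℤ)) = c ^ (-a + (l:ℤ)) * t n := by
    intro a l
    rw [htn, ← zpow_add₀ hcne]
    congr 1
    ring
  have hA : ∀ l : ℕ, 1 - c ^ (-(n : ℤ) - j + (l : ℤ)) - c ^ (-(n : ℤ) - j' + (l : ℤ))
      = 1 - u l (t n) := by
    intro l
    simp only [hu]
    rw [e1 j l, e1 j' l]
    ring
  have hB : ∀ l : ℕ, c ^ (-2 * (n:ℤ) - j - j' + 2 * (l:ℤ)) = v l (t n) := by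
    intro l
    simp only [hv]
    rw [htn, sq, ← zpow_add₀ hcne, ← zpow_add₀ hcne]
    congr 1
    ring
  have hC : c ^ (-2 * (n:ℤ) - j - j') = c ^ (-j - j') * (t n) ^ 2 := by
    rw [htn, sq, ← zpow_add₀ hcne, ← zpow_add₀ hcne]
    congr 1
    ring
  simp only [hA, hB, hC]
  -- the telescoping identity
  have htel : (∏ l ∈ Finset.range (m+1), (1 - u l (t n))⁻¹)
      - ∏ l ∈ Finset.range (m+1), (1 - u l (t n) + v l (t n))⁻¹
      = (t n) ^ 2 * S (t n) := by
    rw [telescope_prod, hS, Finset.mul_sum]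
    refine Finset.sum_congr rfl fun l hl => ?_
    obtain ⟨hA0, hB0⟩ := hn l hl
    have hdiff : (1 - u l (t n))⁻¹ - (1 - u l (t n) + v l (t n))⁻¹
        = v l (t n) * ((1 - u l (t n))⁻¹ * (1 - u l (t n) + v l (t n))⁻¹) := by
      field_simp
      ring
    rw [hdiff, hv]
    ring
  rw [htel, hD]
  rw [show c ^ (-j - j') * (t n) ^ 2 * ((c ^ (2 * (m + 1)) - 1) / (c ^ 2 - 1))
      = (t n) ^ 2 * (c ^ (-j - j') * κ) by rw [hκ]; ring]
  rw [mul_div_mul_left _ _ (pow_ne_zero 2 htn0)]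
end
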